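/- Let X = {(x₁, x₂) ∈ ℝ² : x₂³ − 2x₁³ = 0} and q(x₁, x₂) = x₂³ − 2x₁³ ∈ ℚ[x₁, x₂]. Then: (i) X equals the nonsingular line {(x₁, x₂) ∈ ℝ² : x₂ = ∛2 · x₁}; (ii) the ideal I_ℚ(X) of polynomials in ℚ[x₁, x₂] vanishing on X is the principal ideal generated by q; (iii) ∇q(0, 0) = (0, 0); hence X is a ℚ-algebraic hypersurface of ℝ² that is nonsingular but not ℚ-nonsingular. -/

import Mathlib

/-!
Common definitions formalizing the setting of
"Algebraic realization of stable Poincaré-Reeb graphs" (E. Savi).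

Conventions:
* The ambient Euclidean space `ℝⁿ` is represented by `Fin n → ℝ`.
* `pr n` is the projection onto the first coordinate.
* A domain of finite type `𝒟 ⊆ ℝⁿ` (a closed `C^∞` n-submanifold with boundary
  such that `π|∂𝒟` is a Morse function with finitely many critical values and
  `π|𝒟` is proper) is encoded by a global smooth defining function `h` with
  `𝒟 = {h ≥ 0}`, `∂𝒟 = {h = 0}` and `∇h ≠ 0` on `∂𝒟`; every closed smooth
  codimension-0 submanifold-with-boundary of `ℝⁿ` admits such a description.
* Smooth functions and diffeomorphisms on closed subsets are represented in the
  Whitney sense (`ContDiffOn` / globally defined representatives).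
* Graphs are finite multigraphs, and their topological realizations are used to
  express isomorphism with Poincaré-Reeb graphs.
-/

open Set Topology

noncomputable section

namespace PR

variable {E F : Type*} [NormedAddCommGroup E] [NormedSpace ℝ E]
  [NormedAddCommGroup F] [NormedSpace ℝ F]

/-- Projection `ℝⁿ → ℝ` onto the first coordinate. -/
def pr (n : ℕ) : (Fin n → ℝ) → ℝ := fun x => if h : 0 < n then x ⟨0, h⟩ else 0

/-- A local `C^∞` parametrization of the subset `M ⊆ E` around the point `x`,
from an open subset of `ℝᵈ`. -/
structure LocalParam (M : Set E) (d : ℕ) (x : E) where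
  U : Set (Fin d → ℝ)
  γ : (Fin d → ℝ) → E
  u₀ : Fin d → ℝ
  isOpenU : IsOpen U
  memU : u₀ ∈ U
  eq_x : γ u₀ = x
  smooth : ContDiffOn ℝ (⊤ : ℕ∞) γ U
  injOn : Set.InjOn γ U
  immersion : ∀ u ∈ U, Function.Injective (fderivWithin ℝ γ U u)
  image : ∃ V : Set E, IsOpen V ∧ γ '' U = M ∩ V

/-- `M ⊆ E` is a `d`-dimensional `C^∞` submanifold (without boundary). -/
def IsSubmanifold (M : Set E) (d : ℕ) : Prop := ∀ x ∈ M, Nonempty (LocalParam M d x)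

/-- `x` is a critical point of the restriction `f|_M`. -/
def IsCritPtOn (M : Set E) (f : E → ℝ) (x : E) : Prop :=
  x ∈ M ∧ ∃ (d : ℕ) (P : LocalParam M d x), fderivWithin ℝ (f ∘ P.γ) P.U P.u₀ = 0

/-- `x` is a nondegenerate critical point of `f|_M`: in a local parametrization the
first derivative vanishes and the Hessian is a nondegenerate bilinear form. -/
def IsNondegCritPtOn (M : Set E) (f : E → ℝ) (x : E) : Prop :=
  x ∈ M ∧ ∃ (d : ℕ) (P : LocalParam M d x),
    fderivWithin ℝ (f ∘ P.γ) P.U P.u₀ = 0 ∧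
    ∀ v : Fin d → ℝ, v ≠ 0 → ∃ w : Fin d → ℝ,
      iteratedFDerivWithin ℝ 2 (f ∘ P.γ) P.U P.u₀ ![v, w] ≠ 0

/-- `f|_M` is a Morse function: all critical points are nondegenerate. -/
def IsMorseOn (M : Set E) (f : E → ℝ) : Prop :=
  ∀ x, IsCritPtOn M f x → IsNondegCritPtOn M f x

/-- The set of critical values of `f|_M`. -/
def critVals (M : Set E) (f : E → ℝ) : Set ℝ := f '' {x | IsCritPtOn M f x}

/-- A domain of finite type `𝒟 ⊆ ℝⁿ`, encoded by a global smooth defining function: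
`𝒟 = {h ≥ 0}` is a closed `C^∞` submanifold with boundary `∂𝒟 = {h = 0}`,
the projection onto the first coordinate restricted to `∂𝒟` is a Morse function
with finitely many critical values, and restricted to `𝒟` is proper. -/
structure Domain (n : ℕ) where
  h : (Fin n → ℝ) → ℝ
  smooth : ContDiff ℝ (⊤ : ℕ∞) h
  regular : ∀ x, h x = 0 → fderiv ℝ h x ≠ 0
  morse : IsMorseOn {x | h x = 0} (pr n)
  finCritVals : (critVals {x | h x = 0} (pr n)).Finite
  proper : IsProperMap (fun p : {x : Fin n → ℝ // 0 ≤ h x} => pr n p.1)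

namespace Domain

variable {n : ℕ}

/-- The underlying set `𝒟 = {h ≥ 0}` of a domain of finite type. -/
def carrier (D : Domain n) : Set (Fin n → ℝ) := {x | 0 ≤ D.h x}

/-- The boundary `∂𝒟 = {h = 0}` of a domain of finite type. -/
def bd (D : Domain n) : Set (Fin n → ℝ) := {x | D.h x = 0}

/-- The double `M = {(x,y) : y² = h(x)} ⊆ ℝⁿ⁺¹` of a domain of finite type. -/
def double (D : Domain n) : Set ((Fin n → ℝ) × ℝ) := {p | p.2 ^ 2 = D.h p.1}

end Domain

/-- The fiber `{x ∈ M : f x = t}`. -/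
def fiberOf (M : Set E) (f : E → ℝ) (t : ℝ) : Set E := {x | x ∈ M ∧ f x = t}

/-- The Reeb relation on `M`: `p ∼ q` iff `q` lies in the connected component of
`p` inside the fiber of `f` through `p`. -/
def reebRel (M : Set E) (f : E → ℝ) : ↥M → ↥M → Prop :=
  fun p q => (q : E) ∈ connectedComponentIn (fiberOf M f (f (p : E))) (p : E)

/-- The Reeb space of `f|_M` (the Poincaré-Reeb space when `M` is a domain and
`f` the first-coordinate projection). -/
def ReebOf (M : Set E) (f : E → ℝ) : Type _ := Quot (reebRel M f)

instance (M : Set E) (f : E → ℝ) : TopologicalSpace (ReebOf M f) :=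
  inferInstanceAs (TopologicalSpace (Quot (reebRel M f)))

/-- The quotient map `ρ : M → Reeb space`. -/
def reebMk (M : Set E) (f : E → ℝ) : ↥M → ReebOf M f := Quot.mk _

/-- The Stein factorization `f̃ : Reeb space → ℝ`, with `f̃ ∘ ρ = f`. -/
def reebProj (M : Set E) (f : E → ℝ) : ReebOf M f → ℝ :=
  Quot.lift (fun p => f (p : E))
    (fun _ _ hab => (((connectedComponentIn_subset _ _) hab).2).symm)

/-- A finite multigraph: a set of vertices, a set of edges, and the two
endpoints of each edge. -/
structure Graph where
  V : Type
  E : Type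
  fst : E → V
  snd : E → V

namespace Graph

variable (G : Graph)

instance : TopologicalSpace G.V := ⊥
instance : TopologicalSpace G.E := ⊥

/-- The degree of a vertex of a multigraph. -/
def deg (v : G.V) : ℕ :=
  Nat.card {e : G.E // G.fst e = v} + Nat.card {e : G.E // G.snd e = v}

/-- `ℓ : V → ℝ` is a good orientation of `G`: (realized by a continuous function
on `|G|` which is) strictly monotone on each edge, with local extrema only at
vertices of degree 1, i.e. every vertex of degree `≥ 2` has both a lower and a
higher neighbour along some edge. -/
def IsGoodOrientation (ℓ : G.V → ℝ) : Prop :=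
  (∀ e, ℓ (G.fst e) ≠ ℓ (G.snd e)) ∧
  ∀ v, 2 ≤ G.deg v →
    ((∃ e, (G.fst e = v ∧ ℓ (G.snd e) < ℓ v) ∨ (G.snd e = v ∧ ℓ (G.fst e) < ℓ v)) ∧
     (∃ e, (G.fst e = v ∧ ℓ v < ℓ (G.snd e)) ∨ (G.snd e = v ∧ ℓ v < ℓ (G.fst e))))

/-- Disjoint union of edge-intervals and vertices, before gluing. -/
def Pre := (G.E × unitInterval) ⊕ G.V

instance : TopologicalSpace G.Pre :=
  inferInstanceAs (TopologicalSpace ((G.E × unitInterval) ⊕ G.V))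

/-- The gluing relation identifying the endpoints of the edge-intervals with the
corresponding vertices. -/
def glue : G.Pre → G.Pre → Prop := fun a b =>
  (∃ e : G.E, a = Sum.inl (e, 0) ∧ b = Sum.inr (G.fst e)) ∨
  (∃ e : G.E, a = Sum.inl (e, 1) ∧ b = Sum.inr (G.snd e))

/-- The topological realization `|G|` of the multigraph `G`. -/
def Realization := Quot G.glue

instance : TopologicalSpace G.Realization :=
  inferInstanceAs (TopologicalSpace (Quot G.glue))

/-- The point of `|G|` corresponding to a vertex. -/
def vtx (v : G.V) : G.Realization := Quot.mk _ (Sum.inr v)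

/-- The point of `|G|` at position `t` along the edge `e`. -/
def edgePt (e : G.E) (t : unitInterval) : G.Realization := Quot.mk _ (Sum.inl (e, t))

/-- Adjacency of vertices. -/
def adj : G.V → G.V → Prop := fun v w =>
  ∃ e, (G.fst e = v ∧ G.snd e = w) ∨ (G.fst e = w ∧ G.snd e = v)

/-- The set of connected components of the multigraph `G`. -/
def Components := Quot G.adj

/-- The first Betti number `#E - #V + #components` of a finite multigraph. -/
def b1 : ℕ := Nat.card G.E + Nat.card G.Components - Nat.card G.V

end Graph

/-- The Reeb graph of `f|_M` (whose underlying space is the Reeb space of `f|_M`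
and whose vertices are the classes of the critical points of `f|_B`) is
isomorphic, as a graph oriented by the Stein factorization of `f`, to the graph
`G` oriented by `ℓ`: there is a homeomorphism of the Reeb space with `|G|`
matching the vertices with the classes of critical points, compatibly with the
orders induced on the vertices.  For the Poincaré-Reeb graph of a domain `𝒟`
take `M = 𝒟`, `B = ∂𝒟`, `f = π`; for the Reeb graph of a Morse function on a
manifold `M` take `B = M`. -/
def IsReebGraphIso (M B : Set E) (f : E → ℝ) (G : Graph) (ℓ : G.V → ℝ) : Prop :=
  ∃ Φ : ReebOf M f ≃ₜ G.Realization,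
    (∀ z : ReebOf M f, (∃ v, Φ z = G.vtx v) ↔
        ∃ p : ↥M, IsCritPtOn B f (p : E) ∧ z = reebMk M f p) ∧
    ∀ (v w : G.V) (p q : ↥M), IsCritPtOn B f (p : E) → IsCritPtOn B f (q : E) →
      Φ (reebMk M f p) = G.vtx v → Φ (reebMk M f q) = G.vtx w →
      (ℓ v < ℓ w ↔ f (p : E) < f (q : E))

/-- The Poincaré-Reeb graph `𝓡(𝒟)` of the domain of finite type `𝒟`, oriented
by `π`, is isomorphic to the oriented graph `(G, ℓ)`. -/
def Domain.IsPoincareReebGraph {n : ℕ} (D : Domain n) (G : Graph) (ℓ : G.V → ℝ) : Prop :=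
  IsReebGraphIso D.carrier D.bd (pr n) G ℓ

/-- The real zero set of a polynomial with rational coefficients. -/
def zeroSetQ {n : ℕ} (q : MvPolynomial (Fin n) ℚ) : Set (Fin n → ℝ) :=
  {x | MvPolynomial.aeval x q = 0}

/-- `∇q(x) ≠ 0`. -/
def QGradNonzero {n : ℕ} (q : MvPolynomial (Fin n) ℚ) (x : Fin n → ℝ) : Prop :=
  ∃ i, MvPolynomial.aeval x (MvPolynomial.pderiv i q) ≠ 0

/-- A polynomial is overt if the real zero set of its highest-degree homogeneous
part is `∅` or `{0}`.  A ℚ-algebraic set is projectively ℚ-closed iff it is the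
real zero set of an overt polynomial over ℚ (equivalently, it coincides with its
projective closure in `ℙⁿ(ℝ)`). -/
def Overt {n : ℕ} (q : MvPolynomial (Fin n) ℚ) : Prop :=
  ∀ x : Fin n → ℝ,
    MvPolynomial.aeval x (MvPolynomial.homogeneousComponent q.totalDegree q) = 0 → x = 0

/-- The domain `𝒟` is (globally) algebraic with the ℚ-nonsingular ℚ-algebraic
boundary cut out by `q ∈ ℚ[x₁,…,xₙ]`: `𝒟 = {q ≥ 0}`, `∂𝒟 = Z_ℝⁿ(q)` and
`∇q ≠ 0` on `∂𝒟`.  In particular `𝒟` is a globally algebraic domain of finite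
type and `∂𝒟` is a ℚ-nonsingular ℚ-algebraic hypersurface. -/
def Domain.QAlgebraic {n : ℕ} (D : Domain n) (q : MvPolynomial (Fin n) ℚ) : Prop :=
  D.carrier = {x | 0 ≤ MvPolynomial.aeval x q} ∧ D.bd = zeroSetQ q ∧
  ∀ x ∈ D.bd, QGradNonzero q x

/-- A `C^∞` diffeomorphism between the subsets `A ⊆ E` and `B ⊆ F`, in the
Whitney sense (smoothness on arbitrary sets). -/
structure SetDiffeo (A : Set E) (B : Set F) where
  toFun : E → F
  invFun : F → E
  smooth : ContDiffOn ℝ (⊤ : ℕ∞) toFun A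
  smoothInv : ContDiffOn ℝ (⊤ : ℕ∞) invFun B
  mapsTo : Set.MapsTo toFun A B
  mapsToInv : Set.MapsTo invFun B A
  left_inv : ∀ x ∈ A, invFun (toFun x) = x
  right_inv : ∀ y ∈ B, toFun (invFun y) = y

/-- A diffeomorphism between full-dimensional subsets of `ℝⁿ` is orientation
preserving if its differential has positive determinant. -/
def SetDiffeo.OrientPres {n : ℕ} {A B : Set (Fin n → ℝ)} (φ : SetDiffeo A B) : Prop :=
  ∀ x ∈ A, 0 < LinearMap.det ((fderivWithin ℝ φ.toFun A x).toLinearMap)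

/-- A `C^∞` diffeomorphism of `ℝ`. -/
def IsDiffeoR (ψ : ℝ → ℝ) : Prop :=
  ContDiff ℝ (⊤ : ℕ∞) ψ ∧ Function.Bijective ψ ∧ ∀ t, deriv ψ t ≠ 0

/-- An orientation-preserving `C^∞` diffeomorphism of `ℝ`. -/
def IsOPDiffeoR (ψ : ℝ → ℝ) : Prop :=
  ContDiff ℝ (⊤ : ℕ∞) ψ ∧ Function.Bijective ψ ∧ ∀ t, 0 < deriv ψ t

/-- Vertical equivalence of domains of finite type: orientation-preserving
diffeomorphisms `φ : 𝒟 → 𝒟'` and `ψ : ℝ → ℝ` with `ψ ∘ π|𝒟 = π|𝒟' ∘ φ`. -/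
def VertEquiv {n : ℕ} (D D' : Domain n) : Prop :=
  ∃ (φ : SetDiffeo D.carrier D'.carrier) (ψ : ℝ → ℝ),
    φ.OrientPres ∧ IsOPDiffeoR ψ ∧ ∀ x ∈ D.carrier, ψ (pr n x) = pr n (φ.toFun x)

/-- `f` and `g` have all derivatives up to order `k` within `ε` of each other on
`K`. -/
def CloseC (k : ℕ) (ε : ℝ) (K : Set E) (f g : E → ℝ) : Prop :=
  ∀ j ≤ k, ∀ x ∈ K, ‖iteratedFDeriv ℝ j f x - iteratedFDeriv ℝ j g x‖ ≤ ε

/-- `f|_M` is a stable smooth function: every smooth `g` in some (basic weak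
`C^∞`-topology) neighbourhood of `f` is conjugate to `f` by diffeomorphisms
`φ : M → M`, `ψ : ℝ → ℝ`, i.e. `ψ ∘ f = g ∘ φ` on `M`.  (Smooth functions on
the closed set `M` are represented by globally defined smooth functions, and a
basic neighbourhood is prescribed by `C^k`-closeness on a compact set.) -/
def StableOn (M : Set E) (f : E → ℝ) : Prop :=
  ∃ (k : ℕ) (K : Set E) (ε : ℝ), IsCompact K ∧ 0 < ε ∧
    ∀ g : E → ℝ, ContDiff ℝ (⊤ : ℕ∞) g → CloseC k ε (K ∩ M) f g →
      ∃ (φ : SetDiffeo M M) (ψ : ℝ → ℝ), IsDiffeoR ψ ∧ ∀ x ∈ M, ψ (f x) = g (φ.toFun x)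

/-- A domain of finite type is stable if `π|∂𝒟` is a stable function. -/
def Domain.Stable {n : ℕ} (D : Domain n) : Prop := StableOn D.bd (pr n)

/-- `A` is a deformation retract of `X`. -/
def IsDeformationRetract {X : Type*} [TopologicalSpace X] (A : Set X) : Prop :=
  ∃ H : C(X × unitInterval, X),
    (∀ x, H (x, 0) = x) ∧ (∀ x, H (x, 1) ∈ A) ∧ ∀ a ∈ A, H (a, 1) = a

/-- A basic semialgebraic subset of `ℝᵏ`. -/
def IsBasicSemialgebraic {k : ℕ} (S : Set (Fin k → ℝ)) : Prop :=
  ∃ (p : MvPolynomial (Fin k) ℝ) (m : ℕ) (q : Fin m → MvPolynomial (Fin k) ℝ),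
    S = {x | MvPolynomial.eval x p = 0 ∧ ∀ j, 0 < MvPolynomial.eval x (q j)}

/-- A semialgebraic subset of `ℝᵏ`: a finite union of basic semialgebraic sets. -/
def IsSemialgebraic {k : ℕ} (S : Set (Fin k → ℝ)) : Prop :=
  ∃ (m : ℕ) (B : Fin m → Set (Fin k → ℝ)), (∀ j, IsBasicSemialgebraic (B j)) ∧ S = ⋃ j, B j

/-- A Nash function on `ℝᵏ`: a `C^∞` function with semialgebraic graph. -/
def IsNashFunction {k : ℕ} (f : (Fin k → ℝ) → ℝ) : Prop :=
  ContDiff ℝ (⊤ : ℕ∞) f ∧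
  IsSemialgebraic {y : Fin (k + 1) → ℝ | f (fun i => y i.castSucc) = y (Fin.last k)}

end PR
namespace PR

/-- The ℚ-polynomial `q = x₂³ - 2x₁³` of the remark. -/
def cubicQ : MvPolynomial (Fin 2) ℚ :=
  MvPolynomial.X 1 ^ 3 - MvPolynomial.C 2 * MvPolynomial.X 0 ^ 3

/-- The ℚ-algebraic line `X = {x₂³ - 2x₁³ = 0} ⊆ ℝ²`. -/
def cubicLine : Set (Fin 2 → ℝ) := {x | MvPolynomial.aeval x cubicQ = 0}

/-!
Coordinates `x₁, x₂` of the paper are `x 0, x 1` here. Since `q` is monic in `x₂`, every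
`r ∈ ℚ[x₁, x₂]` is congruent modulo `q` to `a(x₁) + b(x₁) x₂ + d(x₁) x₂²`. If `r` vanishes on
`X`, evaluating at the points `(s, ∛2 s)` with `s ∈ ℚ` gives
`a(s) + b(s) s ∛2 + d(s) s² ∛2² = 0`; as `X³ - 2` is irreducible over `ℚ`, the numbers
`1, ∛2, ∛2²` are linearly independent over `ℚ`, so `a`, `b`, `d` vanish at every rational point
and hence are zero. Thus `I_ℚ(X) = (q)`, and any `q' = q h` has
`∇q'(0) = h(0) ∇q(0) + q(0) ∇h(0) = 0` at the origin, which lies on `X`.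
-/

open Polynomial

lemma rat_pow_three_ne_two (b : ℚ) : b ^ 3 ≠ 2 := by
  intro hb
  have h1 : 1 < b := by
    by_contra! h
    nlinarith [mul_nonneg (sub_nonneg.mpr h) (add_nonneg (sq_nonneg (b + 1 / 2)) zero_le_one)]
  have h2 : b < 2 := by
    by_contra! h
    nlinarith [mul_nonneg (sub_nonneg.mpr h) (add_nonneg (sq_nonneg (b + 1)) zero_le_three)]
  refine Rat.not_irrational b (irrational_nrt_of_notint_nrt 3 2 (by exact_mod_cast hb) ?_ three_pos)
  rintro ⟨y, hy⟩
  have : (1 : ℝ) < y ∧ (y : ℝ) < 2 := by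
    rw [← hy]; exact ⟨by exact_mod_cast h1, by exact_mod_cast h2⟩
  norm_cast at this
  omega

lemma irreducible_X_pow_three_sub_two : Irreducible (X ^ 3 - C 2 : ℚ[X]) :=
  X_pow_sub_C_irreducible_of_prime Nat.prime_three rat_pow_three_ne_two

def cbrtTwo : ℝ := 2 ^ ((1 : ℝ) / 3)

lemma cbrtTwo_pow_three : cbrtTwo ^ 3 = 2 := by
  rw [cbrtTwo, ← Real.rpow_natCast, ← Real.rpow_mul zero_le_two]
  norm_num

lemma minpoly_cbrtTwo : minpoly ℚ cbrtTwo = X ^ 3 - C 2 := by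
  refine (minpoly.eq_of_irreducible_of_monic irreducible_X_pow_three_sub_two ?_ ?_).symm
  · simp [cbrtTwo_pow_three]
  · exact monic_X_pow_sub_C 2 three_ne_zero

lemma eq_zero_of_add_mul_cbrtTwo_add_mul_sq_eq_zero {a b d : ℚ}
    (h : (a : ℝ) + b * cbrtTwo + d * cbrtTwo ^ 2 = 0) : a = 0 ∧ b = 0 ∧ d = 0 := by
  set p : ℚ[X] := C a + C b * X + C d * X ^ 2
  have hp : p = 0 := by
    by_contra hp
    have h3 := minpoly.degree_le_of_ne_zero ℚ cbrtTwo hp (by simpa [p] using h)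
    rw [minpoly_cbrtTwo, degree_X_pow_sub_C three_pos] at h3
    have h2 : p.degree ≤ 2 := by simp only [p]; compute_degree
    exact absurd (h3.trans h2) (by decide)
  refine ⟨?_, ?_, ?_⟩
  · simpa [p] using congr_arg (coeff · 0) hp
  · simpa [p] using congr_arg (coeff · 1) hp
  · simpa [p] using congr_arg (coeff · 2) hp

lemma cubicLine_eq : cubicLine = {x : Fin 2 → ℝ | x 1 = cbrtTwo * x 0} := by
  ext x
  have hcube : (fun t : ℝ => t ^ 3).Injective := (Odd.strictMono_pow (by decide)).injective
  simp only [cubicLine, cubicQ, Set.mem_ofPred_eq, map_sub, map_mul, map_pow, MvPolynomial.aeval_X,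
    map_ofNat, sub_eq_zero]
  rw [← cbrtTwo_pow_three, ← mul_pow]
  exact hcube.eq_iff

lemma exists_eq_cubicQ_mul_add (r : MvPolynomial (Fin 2) ℚ) :
    ∃ (h : MvPolynomial (Fin 2) ℚ) (a b d : ℚ[X]), r = cubicQ * h +
      (aeval (MvPolynomial.X 0) a + aeval (MvPolynomial.X 0) b * MvPolynomial.X 1 +
        aeval (MvPolynomial.X 0) d * MvPolynomial.X 1 ^ 2) := by
  induction r using MvPolynomial.induction_on with
  | C c => exact ⟨0, C c, 0, 0, by simp⟩
  | add p p' hp hp' =>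
    obtain ⟨h, a, b, d, rfl⟩ := hp
    obtain ⟨h', a', b', d', rfl⟩ := hp'
    exact ⟨h + h', a + a', b + b', d + d', by simp only [map_add]; ring⟩
  | mul_X p i hp =>
    obtain ⟨h, a, b, d, rfl⟩ := hp
    match i with
    | 0 => exact ⟨h * MvPolynomial.X 0, a * X, b * X, d * X, by simp only [map_mul, aeval_X]; ring⟩
    | 1 =>
      refine ⟨h * MvPolynomial.X 1 + aeval (MvPolynomial.X 0) d, C 2 * X ^ 3 * d, a, b, ?_⟩
      simp only [cubicQ, map_mul, map_pow, aeval_X, aeval_C, MvPolynomial.algebraMap_eq]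
      ring

lemma aeval_aeval_X {σ R S : Type*} [CommSemiring R] [CommSemiring S] [Algebra R S]
    (x : σ → S) (i : σ) (p : R[X]) :
    MvPolynomial.aeval x (aeval (MvPolynomial.X i : MvPolynomial σ R) p) = aeval (x i) p := by
  rw [← aeval_algHom_apply, MvPolynomial.aeval_X]

lemma aeval_ratCast {K : Type*} [DivisionRing K] [CharZero K] (p : ℚ[X]) (s : ℚ) :
    aeval (s : K) p = ((p.eval s : ℚ) : K) := by
  simpa using aeval_algebraMap_apply_eq_algebraMap_eval (A := K) s p

lemma cubicQ_dvd_of_forall_mem_cubicLine {r : MvPolynomial (Fin 2) ℚ}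
    (hr : ∀ x ∈ cubicLine, MvPolynomial.aeval x r = 0) : cubicQ ∣ r := by
  obtain ⟨h, a, b, d, rfl⟩ := exists_eq_cubicQ_mul_add r
  have hcoeff : ∀ s : ℚ, a.eval s = 0 ∧ b.eval s * s = 0 ∧ d.eval s * s ^ 2 = 0 := by
    intro s
    have hmem : ![(s : ℝ), cbrtTwo * s] ∈ cubicLine := by simp [cubicLine_eq]
    have hq : MvPolynomial.aeval ![(s : ℝ), cbrtTwo * s] cubicQ = 0 := hmem
    have hrs := hr _ hmem
    simp only [map_add, map_mul, map_pow, hq, MvPolynomial.aeval_X, aeval_aeval_X,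
      aeval_ratCast, Matrix.cons_val_zero, Matrix.cons_val_one] at hrs
    refine eq_zero_of_add_mul_cbrtTwo_add_mul_sq_eq_zero ?_
    push_cast
    linear_combination hrs
  have ha : a = 0 := Polynomial.funext fun s => by simpa using (hcoeff s).1
  have hb : b * X = 0 := Polynomial.funext fun s => by simpa using (hcoeff s).2.1
  have hd : d * X ^ 2 = 0 := Polynomial.funext fun s => by simpa using (hcoeff s).2.2
  rw [mul_eq_zero, or_iff_left X_ne_zero] at hb
  rw [mul_eq_zero, or_iff_left (pow_ne_zero 2 X_ne_zero)] at hd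
  exact ⟨h, by simp [ha, hb, hd]⟩

lemma forall_mem_cubicLine_aeval_eq_zero_iff (r : MvPolynomial (Fin 2) ℚ) :
    (∀ x ∈ cubicLine, MvPolynomial.aeval x r = 0) ↔ cubicQ ∣ r := by
  refine ⟨cubicQ_dvd_of_forall_mem_cubicLine, ?_⟩
  rintro ⟨h, rfl⟩ x hx
  rw [map_mul, show MvPolynomial.aeval x cubicQ = 0 from hx, zero_mul]

lemma cubicLine_eq_zeroSet_nonsingular : ∃ g : MvPolynomial (Fin 2) ℝ,
    cubicLine = {x | MvPolynomial.eval x g = 0} ∧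
    ∀ x ∈ cubicLine, ∃ i, MvPolynomial.eval x (MvPolynomial.pderiv i g) ≠ 0 := by
  refine ⟨MvPolynomial.X 1 - MvPolynomial.C cbrtTwo * MvPolynomial.X 0, ?_, fun _ _ => ⟨1, ?_⟩⟩
  · simp [cubicLine_eq, sub_eq_zero]
  · simp [MvPolynomial.pderiv_X]

lemma aeval_zero_pderiv_cubicQ (i : Fin 2) :
    MvPolynomial.aeval (0 : Fin 2 → ℝ) (MvPolynomial.pderiv i cubicQ) = 0 := by
  fin_cases i <;> simp [cubicQ, MvPolynomial.pderiv_X]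

lemma aeval_pderiv_mul_eq_zero {σ R S : Type*} [CommSemiring R] [CommSemiring S] [Algebra R S]
    {x : σ → S} {p : MvPolynomial σ R} {i : σ} (hp : MvPolynomial.aeval x p = 0)
    (hpi : MvPolynomial.aeval x (MvPolynomial.pderiv i p) = 0) (h : MvPolynomial σ R) :
    MvPolynomial.aeval x (MvPolynomial.pderiv i (p * h)) = 0 := by
  simp [hp, hpi]

lemma not_exists_QGradNonzero_cubicLine :
    ¬ ∃ q' : MvPolynomial (Fin 2) ℚ,
        cubicLine = zeroSetQ q' ∧ ∀ x ∈ cubicLine, QGradNonzero q' x := by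
  rintro ⟨q', hzero, hgrad⟩
  have h0 : (0 : Fin 2 → ℝ) ∈ cubicLine := by simp [cubicLine_eq]
  obtain ⟨h, rfl⟩ := (forall_mem_cubicLine_aeval_eq_zero_iff _).mp fun x hx => by
    rwa [hzero] at hx
  obtain ⟨i, hi⟩ := hgrad 0 h0
  exact hi (aeval_pderiv_mul_eq_zero h0 (aeval_zero_pderiv_cubicQ i) h)

/-- Let `X = {(x₁,x₂) ∈ ℝ² : x₂³ - 2x₁³ = 0}` and `q = x₂³ - 2x₁³ ∈ ℚ[x₁,x₂]`.
Then: (i) `X` is the nonsingular line `{x₂ = ∛2 · x₁}` (in particular it is a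
nonsingular real algebraic hypersurface of `ℝ²`); (ii) `I_ℚ(X) = (q)`;
(iii) `∇q(0,0) = (0,0)`; hence `X` is a ℚ-algebraic hypersurface that is
nonsingular but not ℚ-nonsingular. -/
theorem statement16 :
    (cubicLine = {x : Fin 2 → ℝ | x 1 = (2 : ℝ) ^ ((1 : ℝ) / 3) * x 0}) ∧
    (∃ g : MvPolynomial (Fin 2) ℝ,
      cubicLine = {x | MvPolynomial.eval x g = 0} ∧
      ∀ x ∈ cubicLine, ∃ i, MvPolynomial.eval x (MvPolynomial.pderiv i g) ≠ 0) ∧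
    (∀ r : MvPolynomial (Fin 2) ℚ,
      (∀ x ∈ cubicLine, MvPolynomial.aeval x r = 0) ↔ cubicQ ∣ r) ∧
    (∀ i : Fin 2, MvPolynomial.aeval (0 : Fin 2 → ℝ) (MvPolynomial.pderiv i cubicQ) = 0) ∧
    ¬ ∃ q' : MvPolynomial (Fin 2) ℚ,
        cubicLine = zeroSetQ q' ∧ ∀ x ∈ cubicLine, QGradNonzero q' x :=
  ⟨cubicLine_eq, cubicLine_eq_zeroSet_nonsingular, forall_mem_cubicLine_aeval_eq_zero_iff,
    aeval_zero_pderiv_cubicQ, not_exists_QGradNonzero_cubicLine⟩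

end PR
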